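/- arXiv:2208.05407 — 3 statements merged into one kernel-verified Lean document; each statement's English description precedes it below -/
import Mathlib

section
/- For a Euclidean simplex T ⊂ R^2 with facet lines a_i + b_i x + c_i y = 0 (i=1,2,3), let g be the 3×3 matrix with columns (a_i,b_i,c_i). If det(g) ≠ 0, then the normalized volume function Vol((T - (x,y))^∨) of the polar dual of the translated simplex equals ±det(g)/∏_i(a_i + b_i x + c_i y) for (x,y) in the interior of T. In particular, the rational function det(g)/∏_i(a_i+b_i x+c_i y) has constant sign on the interior of T. -/
open MeasureTheory Set Matrix

/-!
Write `sᵢ > 0` for the value of the `i`-th facet form `ℓᵢ` at the interior point `z = (x, y)`.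
As `g` is invertible, the affine function `p ↦ 1 + u · (p - z)` is a combination `∑ wᵢ ℓᵢ`.
Testing it at the vertices of `T` (which exist because `T` is bounded) shows that `u` lies in the
polar set iff all `wᵢ ≥ 0`, i.e. iff `u` is the convex combination of the points
`mᵢ = (bᵢ, cᵢ) / sᵢ` with weights `wᵢ sᵢ`. So the polar set is the triangle `m₀ m₁ m₂`, whose
doubled area is `|(m₀ - m₂) × (m₁ - m₂)| = |det g / ∏ sᵢ|`.
-/

lemma not_isBounded_of_forall_add_smul_mem {E : Type*} [NormedAddCommGroup E] [NormedSpace ℝ E]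
    {S : Set E} {z d : E} (hd : d ≠ 0) (hray : ∀ t : ℝ, 0 ≤ t → z + t • d ∈ S) :
    ¬ Bornology.IsBounded S := by
  intro hS
  obtain ⟨R, hR⟩ := isBounded_iff_forall_norm_le.mp hS
  have hd' : 0 < ‖d‖ := norm_pos_iff.mpr hd
  have hlen : 0 < R + ‖z‖ + 1 := by
    linarith [norm_nonneg z, hR z (by simpa using hray 0 le_rfl)]
  set t := (R + ‖z‖ + 1) / ‖d‖
  have ht : 0 ≤ t := (div_pos hlen hd').le
  have : R + ‖z‖ + 1 ≤ R + ‖z‖ := calc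
    R + ‖z‖ + 1 = ‖(z + t • d) - z‖ := by
      simp [norm_smul, t, abs_of_pos hlen, div_mul_cancel₀ _ hd'.ne']
    _ ≤ ‖z + t • d‖ + ‖z‖ := norm_sub_le _ _
    _ ≤ R + ‖z‖ := by linarith [hR _ (hray t ht)]
  linarith

def stdTriangle : Set (ℝ × ℝ) := {t | 0 ≤ t.1 ∧ 0 ≤ t.2 ∧ t.1 + t.2 ≤ 1}

lemma volume_stdTriangle : volume stdTriangle = ENNReal.ofReal (1 / 2) := by
  have hmeas : MeasurableSet stdTriangle :=
    (measurableSet_le measurable_const measurable_fst).inter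
      ((measurableSet_le measurable_const measurable_snd).inter
        (measurableSet_le (measurable_fst.add measurable_snd) measurable_const))
  have hfiber : ∀ s : ℝ, volume (Prod.mk s ⁻¹' stdTriangle)
      = (Icc 0 1).indicator (fun s => ENNReal.ofReal (1 - s)) s := by
    intro s
    rcases lt_or_ge s 0 with hs | hs
    · have : Prod.mk s ⁻¹' stdTriangle = ∅ := by
        ext t; simp [stdTriangle, hs.not_ge]
      simp [this, hs.not_ge]
    · have : Prod.mk s ⁻¹' stdTriangle = Icc 0 (1 - s) := by
        ext t; simp [stdTriangle, hs, le_sub_iff_add_le']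
      by_cases hs1 : s ≤ 1 <;> simp [this, hs, hs1]
  rw [Measure.volume_eq_prod, Measure.prod_apply hmeas]
  simp_rw [hfiber]
  rw [lintegral_indicator measurableSet_Icc, ← ofReal_integral_eq_lintegral_ofReal,
    integral_Icc_eq_integral_Ioc, ← intervalIntegral.integral_of_le zero_le_one,
    intervalIntegral.integral_sub intervalIntegrable_const intervalIntegral.intervalIntegrable_id]
  · norm_num [integral_id]
  · exact (continuous_const.sub continuous_id).integrableOn_Icc
  · exact (ae_restrict_iff' measurableSet_Icc).2 (.of_forall fun s hs => by simp [hs.2])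

lemma det_coprod_toSpanSingleton (e f : ℝ × ℝ) :
    LinearMap.det ((LinearMap.toSpanSingleton ℝ _ e).coprod (LinearMap.toSpanSingleton ℝ _ f))
      = e.1 * f.2 - e.2 * f.1 := by
  rw [← LinearMap.det_toMatrix (Module.Basis.finTwoProd ℝ), Matrix.det_fin_two]
  simp [LinearMap.toMatrix_apply]
  ring

def barycentricMap (m : Fin 3 → ℝ × ℝ) (β : ℝ × ℝ) : ℝ × ℝ :=
  β.1 • m 0 + β.2 • m 1 + (1 - β.1 - β.2) • m 2

lemma volume_barycentricMap_image_stdTriangle (m : Fin 3 → ℝ × ℝ) :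
    volume (barycentricMap m '' stdTriangle)
      = ENNReal.ofReal (|(m 0 - m 2).1 * (m 1 - m 2).2 - (m 0 - m 2).2 * (m 1 - m 2).1| / 2) := by
  set L := (LinearMap.toSpanSingleton ℝ _ (m 0 - m 2)).coprod
    (LinearMap.toSpanSingleton ℝ _ (m 1 - m 2))
  have hF : barycentricMap m = (· + m 2) ∘ L := by
    ext β <;> simp [barycentricMap, L] <;> ring
  rw [hF, image_comp, image_add_right, measure_preimage_add_right,
    Measure.addHaar_image_linearMap, det_coprod_toSpanSingleton, volume_stdTriangle,
    ← ENNReal.ofReal_mul (abs_nonneg _), mul_one_div]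

variable (a b c : Fin 3 → ℝ)

def facetMatrix : Matrix (Fin 3) (Fin 3) ℝ := of fun j i => ![a i, b i, c i] j

def facetForm (i : Fin 3) (p : ℝ × ℝ) : ℝ := a i + b i * p.1 + c i * p.2

def facetRegion : Set (ℝ × ℝ) := {p | ∀ i, 0 ≤ facetForm a b c i p}

noncomputable def polarVertex (z : ℝ × ℝ) (i : Fin 3) : ℝ × ℝ :=
  (facetForm a b c i z)⁻¹ • (b i, c i)

variable {a b c}

lemma facetForm_add_smul (i : Fin 3) (p d : ℝ × ℝ) (t : ℝ) :
    facetForm a b c i (p + t • d) = facetForm a b c i p + t * (b i * d.1 + c i * d.2) := by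
  simp only [facetForm, Prod.fst_add, Prod.snd_add, Prod.smul_fst, Prod.smul_snd, smul_eq_mul]
  ring

lemma facetForm_sub (i : Fin 3) (p q : ℝ × ℝ) :
    facetForm a b c i p - facetForm a b c i q = b i * (p.1 - q.1) + c i * (p.2 - q.2) := by
  simp only [facetForm]
  ring

lemma facetForm_smul_polarVertex {z : ℝ × ℝ} {i : Fin 3} (hz : facetForm a b c i z ≠ 0) :
    facetForm a b c i z • polarVertex a b c z i = (b i, c i) := by
  rw [polarVertex, smul_smul, mul_inv_cancel₀ hz, one_smul]

lemma exists_vecMul_facetMatrix_eq (hdet : (facetMatrix a b c).det ≠ 0) (v : Fin 3 → ℝ) :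
    ∃ w : Fin 3 → ℝ, ∀ i, w 0 * a i + w 1 * b i + w 2 * c i = v i := by
  obtain ⟨w, hw⟩ := vecMul_surjective_iff_isUnit.2
    ((isUnit_iff_isUnit_det _).2 hdet.isUnit) v
  refine ⟨w, fun i => ?_⟩
  simp [← hw, vecMul, dotProduct, Fin.sum_univ_three, facetMatrix]

lemma exists_mulVec_facetMatrix_eq (hdet : (facetMatrix a b c).det ≠ 0) (α β γ : ℝ) :
    ∃ w : Fin 3 → ℝ, ∑ i, w i * a i = α ∧ ∑ i, w i * b i = β ∧ ∑ i, w i * c i = γ := by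
  obtain ⟨w, hw⟩ := mulVec_surjective_iff_isUnit.2
    ((isUnit_iff_isUnit_det _).2 hdet.isUnit) ![α, β, γ]
  have h k := congrFun hw k
  simp only [mulVec, dotProduct, facetMatrix, of_apply, mul_comm] at h
  exact ⟨w, by simpa using h 0, by simpa using h 1, by simpa using h 2⟩

lemma facetForm_pos_of_mem_interior (hdet : (facetMatrix a b c).det ≠ 0) {p : ℝ × ℝ}
    (hp : p ∈ interior (facetRegion a b c)) (i : Fin 3) : 0 < facetForm a b c i p := by
  refine (interior_subset hp i).lt_of_ne fun hzero => hdet ?_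
  set k := b i ^ 2 + c i ^ 2
  have hline : (fun t : ℝ => facetForm a b c i (p + t • (b i, c i))) = fun t => t * k := by
    ext t; rw [facetForm_add_smul, ← hzero]; ring
  have hmin : IsLocalMin (fun t : ℝ => t * k) 0 := by
    rw [← hline]
    have hcont := (by fun_prop : Continuous fun t : ℝ => p + t • (b i, c i)).tendsto' 0 p (by simp)
    filter_upwards [hcont.eventually (mem_interior_iff_mem_nhds.mp hp)] with t ht
    simpa [← hzero] using ht i
  have hk : k = 0 := hmin.hasDerivAt_eq_zero (hasDerivAt_mul_const k)
  have hb : b i = 0 := by nlinarith [sq_nonneg (b i), sq_nonneg (c i)]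
  have hc : c i = 0 := by nlinarith [sq_nonneg (b i), sq_nonneg (c i)]
  have ha : a i = 0 := by simpa [facetForm, hb, hc] using hzero.symm
  exact det_eq_zero_of_column_eq_zero i fun j => by fin_cases j <;> simp [facetMatrix, ha, hb, hc]

lemma exists_vertex (hdet : (facetMatrix a b c).det ≠ 0)
    (hbdd : Bornology.IsBounded (facetRegion a b c)) {z : ℝ × ℝ} (hz : z ∈ facetRegion a b c)
    (j : Fin 3) : ∃ v, ∃ h > 0, ∀ i, facetForm a b c i v = Pi.single j h i := by
  obtain ⟨w, hw⟩ := exists_vecMul_facetMatrix_eq hdet (Pi.single j 1)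
  rcases lt_or_ge 0 (w 0) with hw0 | hw0
  · refine ⟨(w 1 / w 0, w 2 / w 0), 1 / w 0, one_div_pos.2 hw0, fun i => ?_⟩
    have : facetForm a b c i (w 1 / w 0, w 2 / w 0)
        = (w 0 * a i + w 1 * b i + w 2 * c i) / w 0 := by
      simp only [facetForm]; field_simp
    rw [this, hw i, Pi.single_apply, Pi.single_apply]
    split_ifs <;> simp
  · -- otherwise `d` is a recession direction of the region
    exfalso
    set d : ℝ × ℝ := (w 1 - w 0 * z.1, w 2 - w 0 * z.2)
    have hslope : ∀ i, b i * d.1 + c i * d.2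
        = (Pi.single j 1 : Fin 3 → ℝ) i - w 0 * facetForm a b c i z := by
      intro i; rw [← hw i]; simp only [d, facetForm]; ring
    refine not_isBounded_of_forall_add_smul_mem (S := facetRegion a b c) (z := z) (d := d) ?_
      (fun t ht i => ?_) hbdd
    · intro hd0
      have := hslope j
      simp only [hd0, Prod.fst_zero, Prod.snd_zero, mul_zero, add_zero, Pi.single_eq_same] at this
      nlinarith [hz j]
    · rw [facetForm_add_smul, hslope]
      have hsingle : 0 ≤ (Pi.single j 1 : Fin 3 → ℝ) i := by
        rw [Pi.single_apply]; split_ifs <;> norm_num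
      nlinarith [hz i, mul_nonneg ht hsingle, mul_nonneg (mul_nonneg ht (neg_nonneg.2 hw0)) (hz i)]

lemma nonneg_of_sum_mul_facetForm_nonneg (hdet : (facetMatrix a b c).det ≠ 0)
    (hbdd : Bornology.IsBounded (facetRegion a b c)) {z : ℝ × ℝ} (hz : z ∈ facetRegion a b c)
    {w : Fin 3 → ℝ} (hw : ∀ p ∈ facetRegion a b c, 0 ≤ ∑ i, w i * facetForm a b c i p)
    (j : Fin 3) : 0 ≤ w j := by
  obtain ⟨v, h, hh, hv⟩ := exists_vertex hdet hbdd hz j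
  have hvT : v ∈ facetRegion a b c := fun i => by
    rw [hv i, Pi.single_apply]; split_ifs <;> linarith
  have := hw v hvT
  simp only [hv, Pi.single_apply, mul_ite, mul_zero, Finset.sum_ite_eq', Finset.mem_univ,
    if_true] at this
  exact nonneg_of_mul_nonneg_left this hh

lemma mem_image_of_mem_polar (hdet : (facetMatrix a b c).det ≠ 0)
    (hbdd : Bornology.IsBounded (facetRegion a b c)) {z u : ℝ × ℝ}
    (hz : ∀ i, 0 < facetForm a b c i z)
    (hu : ∀ p ∈ facetRegion a b c, u.1 * (p.1 - z.1) + u.2 * (p.2 - z.2) ≥ -1) :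
    u ∈ barycentricMap (polarVertex a b c z) '' stdTriangle := by
  obtain ⟨w, hA, hB, hC⟩ :=
    exists_mulVec_facetMatrix_eq hdet (1 - (u.1 * z.1 + u.2 * z.2)) u.1 u.2
  have hexpand : ∀ p : ℝ × ℝ,
      ∑ i, w i * facetForm a b c i p = 1 + (u.1 * (p.1 - z.1) + u.2 * (p.2 - z.2)) := by
    intro p
    simp only [facetForm, Fin.sum_univ_three] at hA hB hC ⊢
    linear_combination hA + p.1 * hB + p.2 * hC
  have hw := nonneg_of_sum_mul_facetForm_nonneg hdet hbdd (fun i => (hz i).le)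
    (fun p hp => by linarith [hexpand p, hu p hp])
  have hsum : ∑ i, w i * facetForm a b c i z = 1 := by simpa using hexpand z
  simp only [Fin.sum_univ_three] at hsum hB hC
  refine ⟨(w 0 * facetForm a b c 0 z, w 1 * facetForm a b c 1 z),
    ⟨mul_nonneg (hw 0) (hz 0).le, mul_nonneg (hw 1) (hz 1).le, ?_⟩, ?_⟩
  · nlinarith [mul_nonneg (hw 2) (hz 2).le]
  · rw [barycentricMap, show 1 - w 0 * facetForm a b c 0 z - w 1 * facetForm a b c 1 z
      = w 2 * facetForm a b c 2 z by linarith]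
    simp only [mul_smul, facetForm_smul_polarVertex (hz _).ne']
    ext <;> simp [hB, hC]

lemma mem_polar_of_mem_image {z u p : ℝ × ℝ} (hz : ∀ i, 0 < facetForm a b c i z)
    (hu : u ∈ barycentricMap (polarVertex a b c z) '' stdTriangle)
    (hp : p ∈ facetRegion a b c) : u.1 * (p.1 - z.1) + u.2 * (p.2 - z.2) ≥ -1 := by
  obtain ⟨β, ⟨h0, h1, h01⟩, rfl⟩ := hu
  set r := fun i => (facetForm a b c i z)⁻¹ * (facetForm a b c i p - facetForm a b c i z)
  have hr : ∀ i, 0 ≤ r i + 1 := fun i => by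
    simp only [r, mul_sub, inv_mul_cancel₀ (hz i).ne']
    linarith [mul_nonneg (inv_nonneg.2 (hz i).le) (hp i)]
  have key : (barycentricMap (polarVertex a b c z) β).1 * (p.1 - z.1)
      + (barycentricMap (polarVertex a b c z) β).2 * (p.2 - z.2)
      = β.1 * r 0 + β.2 * r 1 + (1 - β.1 - β.2) * r 2 := by
    simp only [r, barycentricMap, polarVertex, facetForm_sub, Prod.smul_mk, smul_eq_mul,
      Prod.fst_add, Prod.snd_add]
    ring
  rw [ge_iff_le, key]
  nlinarith [mul_nonneg h0 (hr 0), mul_nonneg h1 (hr 1),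
    mul_nonneg (by linarith : 0 ≤ 1 - β.1 - β.2) (hr 2)]

lemma cross_polarVertex_sub {z : ℝ × ℝ} (hz : ∀ i, facetForm a b c i z ≠ 0) :
    (polarVertex a b c z 0 - polarVertex a b c z 2).1
        * (polarVertex a b c z 1 - polarVertex a b c z 2).2
      - (polarVertex a b c z 0 - polarVertex a b c z 2).2
        * (polarVertex a b c z 1 - polarVertex a b c z 2).1
      = (facetMatrix a b c).det / ∏ i, facetForm a b c i z := by
  have h0 := hz 0
  have h1 := hz 1
  have h2 := hz 2
  simp only [polarVertex, Fin.prod_univ_three, Prod.smul_mk, smul_eq_mul, Prod.fst_sub,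
    Prod.snd_sub]
  field_simp
  simp [facetMatrix, det_fin_three, facetForm]
  ring

/-- For a Euclidean triangle `T ⊂ ℝ²` with facet lines `aᵢ + bᵢ x + cᵢ y = 0` and `g` the
`3×3` matrix with columns `(aᵢ, bᵢ, cᵢ)`, the normalized volume (twice the Lebesgue area
in dimension 2) of the polar dual `(T - (x,y))^∨` equals `± det g / ∏ᵢ (aᵢ + bᵢ x + cᵢ y)`
for `(x,y)` in the interior of `T`; in particular the rational function
`det g / ∏ᵢ (aᵢ + bᵢ x + cᵢ y)` has constant sign on the interior of `T`. -/
theorem triangle_canonical_form_det_formula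
    (a b c : Fin 3 → ℝ)
    (g : Matrix (Fin 3) (Fin 3) ℝ)
    (hg : g = Matrix.of fun j i => ![a i, b i, c i] j)
    (hdet : g.det ≠ 0)
    (T : Set (ℝ × ℝ))
    (hT : T = {p : ℝ × ℝ | ∀ i, 0 ≤ a i + b i * p.1 + c i * p.2})
    (hTc : IsCompact T)
    (x y : ℝ) (hxy : (x, y) ∈ interior T) :
    2 * (volume {u : ℝ × ℝ | ∀ p ∈ T, u.1 * (p.1 - x) + u.2 * (p.2 - y) ≥ -1}).toReal
        = |g.det| / |∏ i, (a i + b i * x + c i * y)| ∧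
    (∀ p ∈ interior T, ∀ q ∈ interior T,
      0 < (g.det / ∏ i, (a i + b i * p.1 + c i * p.2))
            * (g.det / ∏ i, (a i + b i * q.1 + c i * q.2))) := by
  obtain rfl : g = facetMatrix a b c := hg
  obtain rfl : T = facetRegion a b c := hT
  have hpos := fun p (hp : p ∈ interior (facetRegion a b c)) =>
    facetForm_pos_of_mem_interior hdet hp
  have hpolar : {u : ℝ × ℝ | ∀ p ∈ facetRegion a b c, u.1 * (p.1 - x) + u.2 * (p.2 - y) ≥ -1}
      = barycentricMap (polarVertex a b c (x, y)) '' stdTriangle :=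
    Subset.antisymm (fun _ hu => mem_image_of_mem_polar hdet hTc.isBounded (hpos _ hxy) hu)
      (fun _ hu _ hp => mem_polar_of_mem_image (hpos _ hxy) hu hp)
  refine ⟨?_, fun p hp q hq => ?_⟩
  · rw [hpolar, volume_barycentricMap_image_stdTriangle,
      cross_polarVertex_sub fun i => (hpos _ hxy i).ne', ENNReal.toReal_ofReal (by positivity),
      abs_div, mul_div_cancel₀ _ two_ne_zero]
    rfl
  · rw [div_mul_div_comm]
    exact div_pos (mul_self_pos.2 hdet) (mul_pos (Finset.prod_pos fun i _ => hpos p hp i)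
      (Finset.prod_pos fun i _ => hpos q hq i))
end

section
/- For a full-dimensional polytope P ⊂ R^d and interior point x, the function x ↦ Vol((P-x)^∨) is a rational function of x on the interior of P; in dimension 1, for P=[a,b] and a<x<b, Vol((P-x)^∨) = 1/(x-a) + 1/(b-x) = (b-a)/((x-a)(b-x)). -/
open MeasureTheory

lemma forall_mem_Icc_le_mul_sub_iff {a b c u x : ℝ} (hab : a ≤ b) :
    (∀ s ∈ Set.Icc a b, c ≤ u * (s - x)) ↔ c ≤ u * (a - x) ∧ c ≤ u * (b - x) := by
  refine ⟨fun h => ⟨h a ⟨le_rfl, hab⟩, h b ⟨hab, le_rfl⟩⟩, ?_⟩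
  rintro ⟨ha, hb⟩ s ⟨has, hsb⟩
  rcases le_total 0 u with hu | hu
  · exact ha.trans (by nlinarith)
  · exact hb.trans (by nlinarith)

lemma polar_Icc_sub_eq_Icc {a b x : ℝ} (hax : a < x) (hxb : x < b) :
    {u : ℝ | ∀ s ∈ Set.Icc a b, u * (s - x) ≥ -1} = Set.Icc (-(1 / (b - x))) (1 / (x - a)) := by
  have hxa : 0 < x - a := sub_pos.mpr hax
  have hbx : 0 < b - x := sub_pos.mpr hxb
  have lower (u : ℝ) : -1 ≤ u * (b - x) ↔ -(1 / (b - x)) ≤ u := by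
    rw [iff_comm, neg_le, le_div_iff₀ hbx]; constructor <;> intro h <;> linarith
  have upper (u : ℝ) : -1 ≤ u * (a - x) ↔ u ≤ 1 / (x - a) := by
    rw [le_div_iff₀ hxa]; constructor <;> intro h <;> linarith
  ext u
  change (∀ s ∈ Set.Icc a b, -1 ≤ u * (s - x)) ↔ _
  rw [forall_mem_Icc_le_mul_sub_iff (hax.trans hxb).le, Set.mem_Icc, lower, upper, and_comm]

/-- Dual volume in dimension one: for `P = [a,b]` and `a < x < b`, the volume of the
polar dual `(P - x)^∨` equals `1/(x-a) + 1/(b-x) = (b-a)/((x-a)(b-x))`. -/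
theorem dual_volume_interval (a b x : ℝ) (hax : a < x) (hxb : x < b) :
    (volume {u : ℝ | ∀ s ∈ Set.Icc a b, u * (s - x) ≥ -1}).toReal
        = 1 / (x - a) + 1 / (b - x) ∧
    1 / (x - a) + 1 / (b - x) = (b - a) / ((x - a) * (b - x)) := by
  have hxa : 0 < x - a := sub_pos.mpr hax
  have hbx : 0 < b - x := sub_pos.mpr hxb
  refine ⟨?_, by rw [div_add_div _ _ hxa.ne' hbx.ne']; ring⟩
  have hlength : 0 ≤ 1 / (x - a) - -(1 / (b - x)) :=
    sub_nonneg.mpr ((neg_nonpos.mpr (one_div_pos.mpr hbx).le).trans (one_div_pos.mpr hxa).le)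
  rw [polar_Icc_sub_eq_Icc hax hxb, Real.volume_Icc, ENNReal.toReal_ofReal hlength]
  ring
end

section
/- Let Φ: C^2 ⇢ C^2 be the rational map Φ(z_1,z_2) = ((2z_1+z_1z_2)/(1+z_1+z_1z_2+z_2), (2z_1z_2+z_2)/(1+z_1+z_1z_2+z_2)). For generic (x,y), the fiber Φ^{-1}(x,y) consists of exactly two points; i.e., the system (2z_1+z_1z_2)/(1+z_1+z_1z_2+z_2) = x, (2z_1z_2+z_2)/(1+z_1+z_1z_2+z_2) = y has exactly two solutions (z_1,z_2) whenever the discriminant 2(x-2)y+(x+2)^2+y^2 is nonzero and the relevant denominators (2x+y-4), (x-y+1) are nonzero. -/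
/-!
Clearing denominators, the two equations become linear in `z₂`:
`α z₂ = β` and `γ z₂ = δ` with `α = z₁ - x(1+z₁)`, `β = x(1+z₁) - 2z₁`, `γ = 1 + 2z₁ - y(1+z₁)`,
`δ = y(1+z₁)`. Since `γ - α = (x-y+1)(1+z₁)` and `α = -1` at `z₁ = -1`, the pair `(α, γ)` never
vanishes, so every `z₁` carries at most one `z₂`, and one exists iff `αδ = βγ`. That condition is
the quadratic `(4-y-2x)z₁² + (2-y-3x)z₁ - x = 0`, whose discriminant is `2(x-2)y + (x+2)² + y²`.
-/

theorem Set.ncard_setOf_prod_eq_ncard_setOf_exists {α β : Type*} {P : α → β → Prop}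
    (h : ∀ a, {b | P a b}.Subsingleton) :
    {p : α × β | P p.1 p.2}.ncard = {a | ∃ b, P a b}.ncard := by
  have hinj : Set.InjOn Prod.fst {p : α × β | P p.1 p.2} := by
    rintro ⟨a, b⟩ hab ⟨a', b'⟩ hab' (rfl : a = a')
    exact Prod.ext rfl (h a hab hab')
  rw [← hinj.ncard_image]
  congr 1
  ext a
  simp

section Field

variable {K : Type*} [Field K]

theorem subsingleton_setOf_mul_eq_and_mul_eq {α β γ δ : K} (h : α ≠ 0 ∨ γ ≠ 0) :
    {t | α * t = β ∧ γ * t = δ}.Subsingleton := by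
  rintro t ⟨hαt, hγt⟩ t' ⟨hαt', hγt'⟩
  rcases h with hα | hγ
  · exact mul_left_cancel₀ hα (hαt.trans hαt'.symm)
  · exact mul_left_cancel₀ hγ (hγt.trans hγt'.symm)

theorem exists_mul_eq_and_mul_eq_iff {α β γ δ : K} (h : α ≠ 0 ∨ γ ≠ 0) :
    (∃ t, α * t = β ∧ γ * t = δ) ↔ α * δ = β * γ := by
  constructor
  · rintro ⟨t, rfl, rfl⟩
    ring
  · intro hcompat
    rcases h with hα | hγ
    · refine ⟨β / α, mul_div_cancel₀ β hα, ?_⟩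
      field_simp
      linear_combination -hcompat
    · refine ⟨δ / γ, ?_, mul_div_cancel₀ δ hγ⟩
      field_simp
      linear_combination hcompat

theorem ncard_setOf_quadratic_eq_zero [IsAlgClosed K] [NeZero (2 : K)] {a b c : K}
    (ha : a ≠ 0) (hd : discrim a b c ≠ 0) :
    {z : K | a * (z * z) + b * z + c = 0}.ncard = 2 := by
  obtain ⟨s, hs⟩ := IsAlgClosed.exists_eq_mul_self (discrim a b c)
  have hs0 : s ≠ 0 := by
    rintro rfl
    exact hd (by simpa using hs)
  have hpair : {z : K | a * (z * z) + b * z + c = 0} =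
      {(-b + s) / (2 * a), (-b - s) / (2 * a)} := by
    ext z
    exact quadratic_eq_zero_iff ha hs z
  rw [hpair, Set.ncard_pair]
  rw [Ne, div_left_inj' (mul_ne_zero two_ne_zero ha)]
  intro h
  have h2s : (2 : K) * s = 0 := by linear_combination h
  exact hs0 ((mul_eq_zero.1 h2s).resolve_left two_ne_zero)

def momentFiber (x y : K) : Set (K × K) :=
  {p : K × K | 1 + p.1 + p.1*p.2 + p.2 ≠ 0 ∧
    (2*p.1 + p.1*p.2) / (1 + p.1 + p.1*p.2 + p.2) = x ∧
    (2*p.1*p.2 + p.2) / (1 + p.1 + p.1*p.2 + p.2) = y}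

theorem momentFiber_eq [NeZero (2 : K)] (x y : K) :
    momentFiber x y = {p : K × K | (p.1 - x * (1 + p.1)) * p.2 = x * (1 + p.1) - 2 * p.1 ∧
      (1 + 2 * p.1 - y * (1 + p.1)) * p.2 = y * (1 + p.1)} := by
  ext ⟨z, t⟩
  simp only [momentFiber, Set.mem_ofPred_eq]
  have hden : 1 + z + z * t + t = (1 + z) * (1 + t) := by ring
  constructor
  · rintro ⟨h0, e1, e2⟩
    rw [div_eq_iff h0] at e1 e2
    constructor
    · linear_combination e1
    · linear_combination e2
  · rintro ⟨e1, e2⟩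
    have h0 : 1 + z + z * t + t ≠ 0 := by
      rw [hden]
      refine mul_ne_zero (fun hz => (two_ne_zero : (2 : K) ≠ 0) ?_) (fun ht => (one_ne_zero : (1 : K) ≠ 0) ?_)
      · linear_combination e2 - e1 + (2 - t + y * t + y - x * t - x) * hz
      · linear_combination -e2 - 2 * e1 +
          (1 + 2 * z - y * (1 + z) + 2 * (z - x * (1 + z))) * ht
    refine ⟨h0, (div_eq_iff h0).2 ?_, (div_eq_iff h0).2 ?_⟩
    · linear_combination e1
    · linear_combination e2

theorem momentFiber_coeff_ne_zero {x y : K} (h : x - y + 1 ≠ 0) (z : K) :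
    z - x * (1 + z) ≠ 0 ∨ 1 + 2 * z - y * (1 + z) ≠ 0 := by
  rw [or_iff_not_imp_left, not_not]
  intro hα hγ
  have hdiff : (x - y + 1) * (1 + z) = 0 := by linear_combination hγ - hα
  rcases mul_eq_zero.1 hdiff with hxy | hz
  · exact h hxy
  · exact (one_ne_zero : (1 : K) ≠ 0) (by linear_combination (1 - x) * hz - hα)

end Field

/-- The algebraic moment map `Φ(z₁,z₂) = ((2z₁+z₁z₂)/(1+z₁+z₁z₂+z₂), (2z₁z₂+z₂)/(1+z₁+z₁z₂+z₂))`
has degree two: for generic `(x,y)` (discriminant `2(x-2)y+(x+2)²+y² ≠ 0` and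
`2x+y-4 ≠ 0`, `x-y+1 ≠ 0`) the fiber `Φ⁻¹(x,y)` consists of exactly two points. -/
theorem moment_map_fiber_two_points (x y : ℂ)
    (hdisc : 2*(x - 2)*y + (x + 2)^2 + y^2 ≠ 0)
    (h1 : 2*x + y - 4 ≠ 0) (h2 : x - y + 1 ≠ 0) :
    Set.ncard {p : ℂ × ℂ | 1 + p.1 + p.1*p.2 + p.2 ≠ 0 ∧
      (2*p.1 + p.1*p.2) / (1 + p.1 + p.1*p.2 + p.2) = x ∧
      (2*p.1*p.2 + p.2) / (1 + p.1 + p.1*p.2 + p.2) = y} = 2 := by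
  change (momentFiber x y).ncard = 2
  have hroots : {z : ℂ | ∃ t, (z - x * (1 + z)) * t = x * (1 + z) - 2 * z ∧
      (1 + 2 * z - y * (1 + z)) * t = y * (1 + z)} =
      {z | (4 - y - 2 * x) * (z * z) + (2 - y - 3 * x) * z + -x = 0} := by
    ext z
    simp only [Set.mem_ofPred_eq]
    rw [exists_mul_eq_and_mul_eq_iff (momentFiber_coeff_ne_zero h2 z)]
    constructor <;> intro h <;> linear_combination h
  rw [momentFiber_eq, Set.ncard_setOf_prod_eq_ncard_setOf_exists
    (P := fun z t => (z - x * (1 + z)) * t = x * (1 + z) - 2 * z ∧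
      (1 + 2 * z - y * (1 + z)) * t = y * (1 + z))
    (fun z => subsingleton_setOf_mul_eq_and_mul_eq (momentFiber_coeff_ne_zero h2 z)), hroots]
  refine ncard_setOf_quadratic_eq_zero (fun hA => h1 (by linear_combination -hA)) ?_
  rw [discrim]
  intro hd
  exact hdisc (by linear_combination hd)
end
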